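/- Let N be a finite ground set, x ∈ [0,1]^N, and let F¹_x, F²_x ⊆ 2^N be two (possibly random, independent) down-closed families such that for every e ∈ N: Pr[I ∪ {e} ∈ F¹_x for all I ⊆ R(x) with I ∈ F¹_x] ≥ c₁ and Pr[I ∪ {e} ∈ F²_x for all I ⊆ R(x) with I ∈ F²_x] ≥ c₂, where R(x) includes each element independently with probability x_e. Then for every e ∈ N: Pr[I ∪ {e} ∈ F¹_x ∩ F²_x for all I ⊆ R(x) with I ∈ F¹_x ∩ F²_x] ≥ c₁·c₂. -/
import Mathlib


/-- Probability that an independent-membership random subset equals exactly `A`. -/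
noncomputable def setProb {α : Type*} [Fintype α] [DecidableEq α]
    (x : α → ℝ) (A : Finset α) : ℝ :=
  (∏ e ∈ A, x e) * ∏ e ∈ Aᶜ, (1 - x e)

open Classical in
/-- Probability that the random set `R(x)` satisfies `E`. -/
noncomputable def prSet {α : Type*} [Fintype α] [DecidableEq α]
    (x : α → ℝ) (E : Finset α → Prop) : ℝ :=
  ∑ A : Finset α, if E A then setProb x A else 0

section AuxFKG
open Finset
variable {α : Type*} [Fintype α] [DecidableEq α]

lemma setProb_nonneg {x : α → ℝ} (hx : ∀ e, x e ∈ Set.Icc (0:ℝ) 1) (A : Finset α) :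
    0 ≤ setProb x A :=
  mul_nonneg (Finset.prod_nonneg fun i _ => (hx i).1)
    (Finset.prod_nonneg fun i _ => by linarith [(hx i).2])

lemma sum_setProb {x : α → ℝ} : ∑ A : Finset α, setProb x A = 1 := by
  have h := Finset.prod_add x (fun e => 1 - x e) Finset.univ
  simp only [add_sub_cancel, Finset.powerset_univ] at h
  rw [Finset.prod_eq_one (fun i _ => by ring)] at h
  rw [show ∑ A : Finset α, setProb x A
      = ∑ A : Finset α, (∏ i ∈ A, x i) * ∏ i ∈ univ \ A, (1 - x i) from
    Finset.sum_congr rfl fun A _ => by rw [setProb, Finset.compl_eq_univ_sdiff], ← h]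

lemma setProb_mul (x : α → ℝ) (A B : Finset α) :
    setProb x A * setProb x B = setProb x (A ∩ B) * setProb x (A ∪ B) := by
  simp only [setProb, Finset.compl_inter, Finset.compl_union]
  calc ((∏ e ∈ A, x e) * ∏ e ∈ Aᶜ, (1 - x e)) * ((∏ e ∈ B, x e) * ∏ e ∈ Bᶜ, (1 - x e))
      = ((∏ e ∈ A ∪ B, x e) * ∏ e ∈ A ∩ B, x e)
        * ((∏ e ∈ Aᶜ ∪ Bᶜ, (1 - x e)) * ∏ e ∈ Aᶜ ∩ Bᶜ, (1 - x e)) := by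
        rw [Finset.prod_union_inter, Finset.prod_union_inter]; ring
    _ = _ := by ring

lemma prSet_fkg {x : α → ℝ} (hx : ∀ e, x e ∈ Set.Icc (0:ℝ) 1)
    (E₁ E₂ : Finset α → Prop)
    (hE₁ : ∀ A B : Finset α, A ⊆ B → E₁ B → E₁ A)
    (hE₂ : ∀ A B : Finset α, A ⊆ B → E₂ B → E₂ A) :
    prSet x E₁ * prSet x E₂ ≤ prSet x (fun A => E₁ A ∧ E₂ A) := by
  classical
  let f : (Finset α)ᵒᵈ → ℝ := fun A => if E₁ (OrderDual.ofDual A) then 1 else 0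
  let g : (Finset α)ᵒᵈ → ℝ := fun A => if E₂ (OrderDual.ofDual A) then 1 else 0
  let μ : (Finset α)ᵒᵈ → ℝ := fun A => setProb x (OrderDual.ofDual A)
  have hμ0 : 0 ≤ μ := fun A => setProb_nonneg hx _
  have hf0 : 0 ≤ f := fun A => by dsimp only [f]; split <;> norm_num
  have hg0 : 0 ≤ g := fun A => by dsimp only [g]; split <;> norm_num
  have hf : Monotone f := by
    intro A B hAB
    dsimp only [f]
    by_cases h : E₁ (OrderDual.ofDual A)
    · rw [if_pos h]
      split
      · norm_num
      · exact absurd (hE₁ _ _ hAB h) ‹_›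
    · rw [if_neg h]; split <;> norm_num
  have hg : Monotone g := by
    intro A B hAB
    dsimp only [g]
    by_cases h : E₂ (OrderDual.ofDual A)
    · rw [if_pos h]
      split
      · norm_num
      · exact absurd (hE₂ _ _ hAB h) ‹_›
    · rw [if_neg h]; split <;> norm_num
  have hμ : ∀ a b : (Finset α)ᵒᵈ, μ a * μ b ≤ μ (a ⊓ b) * μ (a ⊔ b) := by
    intro a b
    dsimp only [μ]
    rw [setProb_mul]
    exact le_of_eq (mul_comm _ _)
  have key := fkg f g μ hμ0 hf0 hg0 hf hg hμ
  have hsum : ∑ a : (Finset α)ᵒᵈ, μ a = 1 := sum_setProb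
  have e1 : ∑ a : (Finset α)ᵒᵈ, μ a * f a = prSet x E₁ :=
    Fintype.sum_equiv OrderDual.ofDual _ _ (fun a => by
      by_cases h : E₁ (OrderDual.ofDual a) <;> simp [μ, f, prSet, h])
  have e2 : ∑ a : (Finset α)ᵒᵈ, μ a * g a = prSet x E₂ :=
    Fintype.sum_equiv OrderDual.ofDual _ _ (fun a => by
      by_cases h : E₂ (OrderDual.ofDual a) <;> simp [μ, g, prSet, h])
  have e3 : ∑ a : (Finset α)ᵒᵈ, μ a * (f a * g a) = prSet x (fun A => E₁ A ∧ E₂ A) :=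
    Fintype.sum_equiv OrderDual.ofDual _ _ (fun a => by
      by_cases h1 : E₁ (OrderDual.ofDual a) <;> by_cases h2 : E₂ (OrderDual.ofDual a) <;>
        simp [μ, f, g, prSet, h1, h2])
  rw [e1, e2, e3, hsum, one_mul] at key
  exact key
lemma prSet_mono {x : α → ℝ} (hx : ∀ e, x e ∈ Set.Icc (0:ℝ) 1)
    {P Q : Finset α → Prop} (h : ∀ A, P A → Q A) : prSet x P ≤ prSet x Q := by
  classical
  refine Finset.sum_le_sum fun A _ => ?_
  by_cases hP : P A
  · simp [hP, h A hP]
  · simp only [hP, if_false]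
    split
    · exact setProb_nonneg hx A
    · exact le_refl _

end AuxFKG

/-- combination lemma for greedy OCRSs: if two independent random
down-closed families `F¹_x`, `F²_x` are `c₁`- and `c₂`-selectable for every element
with respect to `R(x)`, then their intersection is `c₁·c₂`-selectable. -/
theorem stmt11 {α : Type*} [Fintype α] [DecidableEq α]
    (x : α → ℝ) (hx : ∀ e, x e ∈ Set.Icc (0 : ℝ) 1)
    {ι₁ ι₂ : Type*} [Fintype ι₁] [Fintype ι₂]
    (w₁ : ι₁ → ℝ) (w₂ : ι₂ → ℝ)
    (hw₁0 : ∀ i, 0 ≤ w₁ i) (hw₂0 : ∀ j, 0 ≤ w₂ j)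
    (hw₁1 : ∑ i, w₁ i = 1) (hw₂1 : ∑ j, w₂ j = 1)
    (F₁ : ι₁ → Finset α → Prop) (F₂ : ι₂ → Finset α → Prop)
    (hd₁ : ∀ i, ∀ I J : Finset α, J ⊆ I → F₁ i I → F₁ i J)
    (hd₂ : ∀ j, ∀ I J : Finset α, J ⊆ I → F₂ j I → F₂ j J)
    (c₁ c₂ : ℝ) (hc₁ : c₁ ∈ Set.Icc (0 : ℝ) 1) (hc₂ : c₂ ∈ Set.Icc (0 : ℝ) 1)
    (h₁ : ∀ e : α,
      c₁ ≤ ∑ i, w₁ i * prSet x (fun A => ∀ I ⊆ A, F₁ i I → F₁ i (insert e I)))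
    (h₂ : ∀ e : α,
      c₂ ≤ ∑ j, w₂ j * prSet x (fun A => ∀ I ⊆ A, F₂ j I → F₂ j (insert e I)))
    (e : α) :
    c₁ * c₂ ≤ ∑ i, ∑ j, w₁ i * w₂ j *
      prSet x (fun A => ∀ I ⊆ A, (F₁ i I ∧ F₂ j I) →
        (F₁ i (insert e I) ∧ F₂ j (insert e I))) := by
  have key : ∀ i j, prSet x (fun A => ∀ I ⊆ A, F₁ i I → F₁ i (insert e I)) *
      prSet x (fun A => ∀ I ⊆ A, F₂ j I → F₂ j (insert e I)) ≤
      prSet x (fun A => ∀ I ⊆ A, (F₁ i I ∧ F₂ j I) →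
        (F₁ i (insert e I) ∧ F₂ j (insert e I))) := by
    intro i j
    refine le_trans (prSet_fkg hx _ _
      (fun A B hAB hB I hI hFI => hB I (hI.trans hAB) hFI)
      (fun A B hAB hB I hI hFI => hB I (hI.trans hAB) hFI)) ?_
    exact prSet_mono hx fun A hA I hI hF => ⟨hA.1 I hI hF.1, hA.2 I hI hF.2⟩
  calc c₁ * c₂
      ≤ (∑ i, w₁ i * prSet x (fun A => ∀ I ⊆ A, F₁ i I → F₁ i (insert e I))) *
        (∑ j, w₂ j * prSet x (fun A => ∀ I ⊆ A, F₂ j I → F₂ j (insert e I))) :=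
        mul_le_mul (h₁ e) (h₂ e) hc₂.1 (hc₁.1.trans (h₁ e))
    _ = ∑ i, ∑ j, (w₁ i * prSet x (fun A => ∀ I ⊆ A, F₁ i I → F₁ i (insert e I))) *
        (w₂ j * prSet x (fun A => ∀ I ⊆ A, F₂ j I → F₂ j (insert e I))) :=
        Finset.sum_mul_sum _ _ _ _
    _ ≤ _ := by
        refine Finset.sum_le_sum fun i _ => Finset.sum_le_sum fun j _ => ?_
        rw [mul_mul_mul_comm]
        exact mul_le_mul_of_nonneg_left (key i j)
          (mul_nonneg (hw₁0 i) (hw₂0 j))
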